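/- Suppose 𝒜 ⊆ E^∞ is open or closed. Then there is a block subspace X such that either (1) II has a strategy in the relational game A_X to play in 𝒜, or (2) I has a strategy in the relational game B_X to play in ∼𝒜. -/

import Mathlib

section Defs

variable {𝔽 : Type} [Field 𝔽] {E : Type} [AddCommGroup E] [Module 𝔽 E]

/-- The support of a vector with respect to the basis `b`. -/
noncomputable def supp (b : Module.Basis ℕ 𝔽 E) (x : E) : Finset ℕ :=
  (b.repr x).support

/-- `VecLt b x y` means `x < y`: every element of the support of `x` is smaller than
every element of the support of `y`. -/
def VecLt (b : Module.Basis ℕ 𝔽 E) (x y : E) : Prop :=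
  ∀ m ∈ supp b x, ∀ n ∈ supp b y, m < n

/-- `NatLt b k x` means `k < x`: `k` is smaller than every element of the support of `x`. -/
def NatLt (b : Module.Basis ℕ 𝔽 E) (k : ℕ) (x : E) : Prop :=
  ∀ n ∈ supp b x, k < n

/-- An infinite block sequence: a sequence of nonzero vectors with `x n < x (n + 1)`. -/
def IsBlockSeq (b : Module.Basis ℕ 𝔽 E) (x : ℕ → E) : Prop :=
  (∀ n, x n ≠ 0) ∧ ∀ n, VecLt b (x n) (x (n + 1))

/-- A finite block sequence: a list of nonzero vectors, consecutively increasing in the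
block ordering. -/
def IsFinBlockSeq (b : Module.Basis ℕ 𝔽 E) (l : List E) : Prop :=
  (∀ x ∈ l, x ≠ 0) ∧ l.Chain' (VecLt b)

/-- A block subspace: a subspace spanned by an infinite block sequence. -/
def IsBlockSubspace (b : Module.Basis ℕ 𝔽 E) (X : Submodule 𝔽 E) : Prop :=
  ∃ y : ℕ → E, IsBlockSeq b y ∧ X = Submodule.span 𝔽 (Set.range y)

/-- The list of the first `n` values of a sequence. -/
def hist {α : Type _} (x : ℕ → α) (n : ℕ) : List α :=
  List.ofFn (fun j : Fin n => x j)

/-- The concatenation of a finite prefix with an infinite sequence. -/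
def prefCat {α : Type _} (l : List α) (x : ℕ → α) : ℕ → α := fun n =>
  if h : n < l.length then l.get ⟨n, h⟩ else x (n - l.length)

/-- The interleaving `x 0, y 0, x 1, y 1, …` of two sequences. -/
def interleave {α : Type _} (x y : ℕ → α) : ℕ → α := fun k =>
  if k % 2 = 0 then x (k / 2) else y (k / 2)

/-- Helper: the sequence of integers produced by a strategy answering plays
`p i : E × Submodule 𝔽 E` with a vector and an integer, starting with `n0`. -/
def natsA (n0 : ℕ) (σ : List (E × Submodule 𝔽 E) → E × ℕ)
    (p : ℕ → E × Submodule 𝔽 E) : ℕ → ℕ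
  | 0 => n0
  | k + 1 => (σ (hist p (k + 1))).2

/-- Player II has a strategy in the relational game `A_X(pre)` to play in `A`
(case of an even-length prefix): II opens with an integer `n0`; I plays nonzero vectors
`x i ∈ X` with `n i < x i`, forming a block sequence, together with block subspaces
`Z i ≤ X`; II answers with a nonzero vector `y i ∈ Z i` (II's vectors forming a block
sequence) and the next integer `n (i+1)`, the integers being strictly increasing.  The
outcome is `pre` followed by `x 0, y 0, x 1, y 1, …`. -/
def IIWinsAEven (b : Module.Basis ℕ 𝔽 E) (X : Submodule 𝔽 E) (pre : List E)
    (A : Set (ℕ → E)) : Prop :=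
  ∃ (n0 : ℕ) (σ : List (E × Submodule 𝔽 E) → E × ℕ),
    ∀ p : ℕ → E × Submodule 𝔽 E,
      (∀ i, (p i).1 ∈ X ∧ (p i).1 ≠ 0 ∧ NatLt b (natsA n0 σ p i) (p i).1 ∧
          VecLt b (p i).1 (p (i + 1)).1 ∧ IsBlockSubspace b (p i).2 ∧ (p i).2 ≤ X) →
      (∀ i, (σ (hist p (i + 1))).1 ∈ (p i).2 ∧ (σ (hist p (i + 1))).1 ≠ 0 ∧
          VecLt b (σ (hist p (i + 1))).1 (σ (hist p (i + 2))).1 ∧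
          natsA n0 σ p i < natsA n0 σ p (i + 1)) ∧
        prefCat pre
          (interleave (fun i => (p i).1) (fun i => (σ (hist p (i + 1))).1)) ∈ A

/-- Player II has a strategy in the relational game `A_X(pre)` to play in `A`
(case of an odd-length prefix): I plays block subspaces `Z i ≤ X` together with nonzero
vectors `x i ∈ X` (to accompany `Z (i+1)`) with `n i < x i`, the `x i` forming a block
sequence; II answers `Z i` with a nonzero vector `y i ∈ Z i` (II's vectors forming a
block sequence) and a strictly increasing integer `n i`.  The outcome is `pre` followed
by `y 0, x 0, y 1, x 1, …`. -/
def IIWinsAOdd (b : Module.Basis ℕ 𝔽 E) (X : Submodule 𝔽 E) (pre : List E)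
    (A : Set (ℕ → E)) : Prop :=
  ∃ σ : List (Submodule 𝔽 E × E) → Submodule 𝔽 E → E × ℕ,
    ∀ (Z : ℕ → Submodule 𝔽 E) (x : ℕ → E),
      (∀ i, IsBlockSubspace b (Z i) ∧ Z i ≤ X ∧ x i ∈ X ∧ x i ≠ 0 ∧
          NatLt b (σ (hist (fun j => (Z j, x j)) i) (Z i)).2 (x i) ∧
          VecLt b (x i) (x (i + 1))) →
      (∀ i, (σ (hist (fun j => (Z j, x j)) i) (Z i)).1 ∈ Z i ∧
          (σ (hist (fun j => (Z j, x j)) i) (Z i)).1 ≠ 0 ∧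
          VecLt b (σ (hist (fun j => (Z j, x j)) i) (Z i)).1
            (σ (hist (fun j => (Z j, x j)) (i + 1)) (Z (i + 1))).1 ∧
          (σ (hist (fun j => (Z j, x j)) i) (Z i)).2 <
            (σ (hist (fun j => (Z j, x j)) (i + 1)) (Z (i + 1))).2) ∧
        prefCat pre
          (interleave (fun i => (σ (hist (fun j => (Z j, x j)) i) (Z i)).1) x) ∈ A

/-- Player II has a strategy in the relational game `A_X(pre)` to play in `A`. -/
def IIWinsA (b : Module.Basis ℕ 𝔽 E) (X : Submodule 𝔽 E) (pre : List E)
    (A : Set (ℕ → E)) : Prop :=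
  if pre.length % 2 = 0 then IIWinsAEven b X pre A else IIWinsAOdd b X pre A

/-- Player I has a strategy in the relational game `B_X(pre)` to play in `A`
(case of an even-length prefix): II plays block subspaces `Z i ≤ X` and nonzero vectors
`y i ∈ X` with `n i < y i`, II's vectors forming a block sequence; I answers `Z i` with
a nonzero vector `x i ∈ Z i` (I's vectors forming a block sequence) and a strictly
increasing integer `n i`.  The outcome is `pre` followed by `x 0, y 0, x 1, y 1, …`. -/
def IWinsBEven (b : Module.Basis ℕ 𝔽 E) (X : Submodule 𝔽 E) (pre : List E)
    (A : Set (ℕ → E)) : Prop :=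
  ∃ τ : List (Submodule 𝔽 E × E) → Submodule 𝔽 E → E × ℕ,
    ∀ (Z : ℕ → Submodule 𝔽 E) (y : ℕ → E),
      (∀ i, IsBlockSubspace b (Z i) ∧ Z i ≤ X ∧ y i ∈ X ∧ y i ≠ 0 ∧
          NatLt b (τ (hist (fun j => (Z j, y j)) i) (Z i)).2 (y i) ∧
          VecLt b (y i) (y (i + 1))) →
      (∀ i, (τ (hist (fun j => (Z j, y j)) i) (Z i)).1 ∈ Z i ∧
          (τ (hist (fun j => (Z j, y j)) i) (Z i)).1 ≠ 0 ∧
          VecLt b (τ (hist (fun j => (Z j, y j)) i) (Z i)).1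
            (τ (hist (fun j => (Z j, y j)) (i + 1)) (Z (i + 1))).1 ∧
          (τ (hist (fun j => (Z j, y j)) i) (Z i)).2 <
            (τ (hist (fun j => (Z j, y j)) (i + 1)) (Z (i + 1))).2) ∧
        prefCat pre
          (interleave (fun i => (τ (hist (fun j => (Z j, y j)) i) (Z i)).1) y) ∈ A

/-- Player I has a strategy in the relational game `B_X(pre)` to play in `A`
(case of an odd-length prefix): I opens with an integer `t0`; II plays nonzero vectors
`y i ∈ X` with `n i < y i`, forming a block sequence, together with block subspaces
`Z i ≤ X`; I answers with a nonzero vector `x i ∈ Z i` (I's vectors forming a block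
sequence) and the next integer `n (i+1)`, the integers being strictly increasing.  The
outcome is `pre` followed by `y 0, x 0, y 1, x 1, …`. -/
def IWinsBOdd (b : Module.Basis ℕ 𝔽 E) (X : Submodule 𝔽 E) (pre : List E)
    (A : Set (ℕ → E)) : Prop :=
  ∃ (t0 : ℕ) (τ : List (E × Submodule 𝔽 E) → E × ℕ),
    ∀ q : ℕ → E × Submodule 𝔽 E,
      (∀ i, (q i).1 ∈ X ∧ (q i).1 ≠ 0 ∧ NatLt b (natsA t0 τ q i) (q i).1 ∧
          VecLt b (q i).1 (q (i + 1)).1 ∧ IsBlockSubspace b (q i).2 ∧ (q i).2 ≤ X) →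
      (∀ i, (τ (hist q (i + 1))).1 ∈ (q i).2 ∧ (τ (hist q (i + 1))).1 ≠ 0 ∧
          VecLt b (τ (hist q (i + 1))).1 (τ (hist q (i + 2))).1 ∧
          natsA t0 τ q i < natsA t0 τ q (i + 1)) ∧
        prefCat pre
          (interleave (fun i => (q i).1) (fun i => (τ (hist q (i + 1))).1)) ∈ A

/-- Player I has a strategy in the relational game `B_X(pre)` to play in `A`. -/
def IWinsB (b : Module.Basis ℕ 𝔽 E) (X : Submodule 𝔽 E) (pre : List E)
    (A : Set (ℕ → E)) : Prop :=
  if pre.length % 2 = 0 then IWinsBEven b X pre A else IWinsBOdd b X pre A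

end Defs

/-!
Whether a player wins either game below a subspace depends only on a tail of that subspace, so
by fusion and diagonalisation a single block subspace `X` decides, for all finite positions `u`
at once, whether I wins `B` (resp. II wins `A`) from `u` below block subspaces of `X`; a second
fusion makes `X` also determine the one-round games from every position. Say `𝒜` is closed and
I does not win `B` from the empty position. From a position not won by I, II (playing `A`) can
answer every move of I so as to reach such a position again: otherwise I would win from there
by playing one round and then switching to a winning strategy. Every position not won by I has
an extension in `𝒜`, so the outcome of II's play is a limit of points of `𝒜`. For open `𝒜` the
same argument runs with the players and `𝒜`, `∼𝒜` exchanged.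
-/

open Submodule

section Supports

variable {𝔽 : Type} [Field 𝔽] {E : Type} [AddCommGroup E] [Module 𝔽 E]
  {b : Module.Basis ℕ 𝔽 E}

variable (b) in
lemma supp_nonempty {x : E} (hx : x ≠ 0) : (supp b x).Nonempty :=
  Finsupp.support_nonempty_iff.2 (by simpa using hx)

lemma NatLt.mono {m n : ℕ} {x : E} (h : NatLt b n x) (hmn : m ≤ n) : NatLt b m x :=
  fun k hk => hmn.trans_lt (h k hk)

lemma VecLt.trans {x y z : E} (hxy : VecLt b x y) (hyz : VecLt b y z) (hy : y ≠ 0) :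
    VecLt b x z := by
  obtain ⟨k, hk⟩ := supp_nonempty b hy
  exact fun m hm n hn => (hxy m hm k hk).trans (hyz k hk n hn)

variable (b) in
def above (m : ℕ) : Submodule 𝔽 E := span 𝔽 (b '' Set.Ioi m)

lemma mem_above_iff {m : ℕ} {v : E} : v ∈ above b m ↔ NatLt b m v := by
  rw [above, b.mem_span_image]
  exact ⟨fun h k hk => h hk, fun h k hk => h k hk⟩

variable (b) in
noncomputable def suppBound (s : List E) : ℕ := (s.map fun v => (supp b v).sup id).sum

lemma le_suppBound {s : List E} {v : E} (hv : v ∈ s) {k : ℕ} (hk : k ∈ supp b v) :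
    k ≤ suppBound b s :=
  (Finset.le_sup (f := id) hk).trans (List.le_sum_of_mem (List.mem_map_of_mem hv))

lemma NatLt.lt_suppBound {s : List E} {v : E} (hv : v ∈ s) (hv0 : v ≠ 0) {n : ℕ}
    (h : NatLt b n v) : n < suppBound b s := by
  obtain ⟨k, hk⟩ := supp_nonempty b hv0
  exact (h k hk).trans_le (le_suppBound hv hk)

lemma NatLt.vecLt_of_mem {s : List E} {x y : E} (hx : x ∈ s) (hy : NatLt b (suppBound b s) y) :
    VecLt b x y :=
  fun _ hm _ hn => (le_suppBound hx hm).trans_lt (hy _ hn)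

end Supports

section BlockSubspaces

variable {𝔽 : Type} [Field 𝔽] {E : Type} [AddCommGroup E] [Module 𝔽 E]
  {b : Module.Basis ℕ 𝔽 E} {w : ℕ → E}

lemma IsBlockSeq.vecLt_of_lt (hw : IsBlockSeq b w) {i j : ℕ} (hij : i < j) :
    VecLt b (w i) (w j) := by
  induction j with
  | zero => omega
  | succ j ih =>
    rcases Nat.lt_succ_iff_lt_or_eq.1 hij with h | rfl
    · exact (ih h).trans (hw.2 j) (hw.1 j)
    · exact hw.2 i

lemma IsBlockSeq.le_of_mem_supp (hw : IsBlockSeq b w) {n k : ℕ} (hk : k ∈ supp b (w n)) :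
    n ≤ k := by
  induction n generalizing k with
  | zero => exact k.zero_le
  | succ n ih =>
    obtain ⟨k', hk'⟩ := supp_nonempty b (hw.1 n)
    exact (ih hk').trans_lt (hw.2 n k' hk' k hk)

lemma IsBlockSeq.comp_add (hw : IsBlockSeq b w) (j : ℕ) : IsBlockSeq b fun i => w (i + j) :=
  ⟨fun i => hw.1 _, fun i => by simpa only [Nat.add_right_comm] using hw.2 (i + j)⟩

lemma IsBlockSeq.supp_sum (hw : IsBlockSeq b w) (c : ℕ →₀ 𝔽) :
    supp b (c.sum fun i a => a • w i) = c.support.biUnion fun i => supp b (w i) := by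
  classical
  have hsupp : ∀ i, supp b (c i • w i) ⊆ supp b (w i) := fun i => by
    rw [supp, map_smul]; exact Finsupp.support_smul
  have hdisj : ∀ i j, i ≠ j → Disjoint (supp b (w i)) (supp b (w j)) := by
    intro i j hij
    rcases hij.lt_or_gt with h | h
    · exact Finset.disjoint_left.2 fun k hi hj => lt_irrefl k (hw.vecLt_of_lt h k hi k hj)
    · exact Finset.disjoint_left.2 fun k hi hj => lt_irrefl k (hw.vecLt_of_lt h k hj k hi)
  rw [supp, Finsupp.sum, map_sum, Finsupp.support_sum_eq_biUnion _ fun i j hij =>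
    (hdisj i j hij).mono (hsupp i) (hsupp j)]
  refine Finset.biUnion_congr rfl fun i hi => ?_
  rw [map_smul, Finsupp.support_smul_eq (Finsupp.mem_support_iff.1 hi)]
  rfl

/-- The blocks supported above `m` form a tail of `w`, and a vector of the span supported
above `m` only involves those blocks. -/
lemma IsBlockSeq.inf_above (hw : IsBlockSeq b w) (m : ℕ) :
    ∃ j, span 𝔽 (Set.range w) ⊓ above b m = span 𝔽 (Set.range fun i => w (i + j)) := by
  classical
  have hex : ∃ j, NatLt b m (w j) := ⟨m + 1, fun k hk => hw.le_of_mem_supp hk⟩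
  refine ⟨Nat.find hex, le_antisymm ?_ ?_⟩
  · rintro v ⟨hv, hvm⟩
    obtain ⟨c, rfl⟩ := Finsupp.mem_span_range_iff_exists_finsupp.1 hv
    refine sum_mem fun i hi => smul_mem _ _ (subset_span ⟨i - Nat.find hex, ?_⟩)
    suffices Nat.find hex ≤ i by simp only [Nat.sub_add_cancel this]
    refine Nat.find_min' hex fun k hk => mem_above_iff.1 hvm k ?_
    rw [hw.supp_sum]
    exact Finset.mem_biUnion.2 ⟨i, hi, hk⟩
  · rw [span_le]
    rintro _ ⟨i, rfl⟩
    refine ⟨subset_span ⟨_, rfl⟩, mem_above_iff.2 ?_⟩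
    rcases (Nat.zero_le i).eq_or_lt with rfl | hi
    · simpa using Nat.find_spec hex
    · obtain ⟨k', hk'⟩ := supp_nonempty b (hw.1 (Nat.find hex))
      exact fun k hk => (Nat.find_spec hex k' hk').trans
        (hw.vecLt_of_lt (i := Nat.find hex) (by omega) k' hk' k hk)

lemma IsBlockSubspace.inf_above {Z : Submodule 𝔽 E} (hZ : IsBlockSubspace b Z) (m : ℕ) :
    IsBlockSubspace b (Z ⊓ above b m) := by
  obtain ⟨w, hw, rfl⟩ := hZ
  obtain ⟨j, hj⟩ := hw.inf_above m
  exact ⟨_, hw.comp_add j, hj⟩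

lemma IsBlockSubspace.exists_ne_zero {Z : Submodule 𝔽 E} (hZ : IsBlockSubspace b Z) :
    ∃ v ∈ Z, v ≠ 0 := by
  obtain ⟨w, hw, rfl⟩ := hZ
  exact ⟨w 0, subset_span ⟨0, rfl⟩, hw.1 0⟩

variable (b) in
lemma isBlockSubspace_top : IsBlockSubspace b (⊤ : Submodule 𝔽 E) := by
  refine ⟨b, ⟨b.ne_zero, fun n => ?_⟩, b.span_eq.symm⟩
  simp [VecLt, supp]

end BlockSubspaces

section Fusion

variable {𝔽 : Type} [Field 𝔽] {E : Type} [AddCommGroup E] [Module 𝔽 E]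
  {b : Module.Basis ℕ 𝔽 E} {X Y : Submodule 𝔽 E} {S T : E → Prop}

variable (b) in
def TailIn (X : Submodule 𝔽 E) (S : E → Prop) : Prop :=
  ∃ N, ∀ v ∈ X, v ≠ 0 → NatLt b N v → S v

variable (b) in
def DenseBelow (X : Submodule 𝔽 E) (S : E → Prop) : Prop :=
  ∀ Z, IsBlockSubspace b Z → Z ≤ X → ∃ v ∈ Z, v ≠ 0 ∧ S v

lemma TailIn.mono (hXY : X ≤ Y) (h : TailIn b Y S) : TailIn b X S :=
  Exists.imp (fun _ hN v hv => hN v (hXY hv)) h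

lemma TailIn.imp (h : TailIn b X S) (hST : ∀ v, S v → T v) : TailIn b X T :=
  Exists.imp (fun _ hN v hv hv0 hvN => hST v (hN v hv hv0 hvN)) h

lemma TailIn.of_inf_above_le {V : Submodule 𝔽 E} {m : ℕ} (hXV : X ⊓ above b m ≤ V)
    (h : TailIn b V S) : TailIn b X S := by
  obtain ⟨N, hN⟩ := h
  refine ⟨max m N, fun v hv hv0 hvN => hN v (hXV ⟨hv, mem_above_iff.2 ?_⟩) hv0 ?_⟩
  · exact hvN.mono (le_max_left m N)
  · exact hvN.mono (le_max_right m N)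

lemma DenseBelow.mono (hXY : X ≤ Y) (h : DenseBelow b Y S) : DenseBelow b X S :=
  fun Z hZ hZX => h Z hZ (hZX.trans hXY)

lemma DenseBelow.imp (h : DenseBelow b X S) (hST : ∀ v, S v → T v) : DenseBelow b X T :=
  fun Z hZ hZX => (h Z hZ hZX).imp fun v ⟨hvZ, hv0, hv⟩ => ⟨hvZ, hv0, hST v hv⟩

lemma DenseBelow.exists_natLt (h : DenseBelow b X S) {Z : Submodule 𝔽 E}
    (hZ : IsBlockSubspace b Z) (hZX : Z ≤ X) (m : ℕ) : ∃ v ∈ Z, v ≠ 0 ∧ NatLt b m v ∧ S v := by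
  obtain ⟨v, hv, hv0, hS⟩ := h _ (hZ.inf_above m) (inf_le_left.trans hZX)
  exact ⟨v, hv.1, hv0, mem_above_iff.1 hv.2, hS⟩

lemma exists_antitone_chain (Q : ℕ → Submodule 𝔽 E → Prop) {W : Submodule 𝔽 E}
    (hW : IsBlockSubspace b W) :
    ∃ U : ℕ → Submodule 𝔽 E, U 0 = W ∧ (∀ j, IsBlockSubspace b (U j)) ∧ Antitone U ∧
      ∀ j, (∃ V, IsBlockSubspace b V ∧ V ≤ U j ∧ Q j V) → Q j (U (j + 1)) := by
  classical
  let step (j : ℕ) (V : Submodule 𝔽 E) : Submodule 𝔽 E :=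
    if h : ∃ V', IsBlockSubspace b V' ∧ V' ≤ V ∧ Q j V' then h.choose else V
  have hstep (j : ℕ) (V : Submodule 𝔽 E) (hV : IsBlockSubspace b V) :
      IsBlockSubspace b (step j V) ∧ step j V ≤ V ∧
        ((∃ V', IsBlockSubspace b V' ∧ V' ≤ V ∧ Q j V') → Q j (step j V)) := by
    by_cases h : ∃ V', IsBlockSubspace b V' ∧ V' ≤ V ∧ Q j V'
    · simp only [step, dif_pos h]
      exact ⟨h.choose_spec.1, h.choose_spec.2.1, fun _ => h.choose_spec.2.2⟩
    · simp only [step, dif_neg h]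
      exact ⟨hV, le_rfl, fun h' => absurd h' h⟩
  let U (j : ℕ) : Submodule 𝔽 E := Nat.rec W step j
  have hU (j : ℕ) : IsBlockSubspace b (U j) := by
    induction j with
    | zero => exact hW
    | succ j ih => exact (hstep j _ ih).1
  exact ⟨U, rfl, hU, antitone_nat_of_succ_le fun j => (hstep j _ (hU j)).2.1,
    fun j => (hstep j _ (hU j)).2.2⟩

/-- Diagonalisation: pick successive blocks `w j ∈ U j`; the blocks from `w j` on lie in `U j`. -/
lemma exists_inf_above_le_of_antitone {U : ℕ → Submodule 𝔽 E}
    (hU : ∀ j, IsBlockSubspace b (U j)) (hanti : Antitone U) :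
    ∃ X, IsBlockSubspace b X ∧ X ≤ U 0 ∧ ∀ j, ∃ N, X ⊓ above b N ≤ U j := by
  choose v hvU hv0 using fun j m => ((hU j).inf_above m).exists_ne_zero
  let w (j : ℕ) : E := Nat.rec (v 0 0) (fun j x => v (j + 1) (suppBound b [x])) j
  have hwU (j : ℕ) : w j ∈ U j := by cases j <;> exact (hvU _ _).1
  have hw : IsBlockSeq b w := by
    refine ⟨fun j => by cases j <;> exact hv0 _ _, fun j => ?_⟩
    exact NatLt.vecLt_of_mem (List.mem_singleton_self _) (mem_above_iff.1 (hvU _ _).2)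
  refine ⟨_, ⟨w, hw, rfl⟩, span_le.2 ?_, fun j => ⟨suppBound b (hist w j), ?_⟩⟩
  · rintro _ ⟨j, rfl⟩
    exact hanti (Nat.zero_le j) (hwU j)
  · obtain ⟨k, hk⟩ := hw.inf_above (suppBound b (hist w j))
    rw [hk, span_le]
    rintro _ ⟨i, rfl⟩
    refine hanti ?_ (hwU _)
    by_contra hlt
    have hmem : w (i + k) ∈ hist w j := List.mem_ofFn.2 ⟨⟨i + k, by omega⟩, rfl⟩
    have habove : w (i + k) ∈ above b (suppBound b (hist w j)) :=
      (hk.ge (subset_span ⟨i, rfl⟩)).2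
    exact (mem_above_iff.1 habove).lt_suppBound hmem (hw.1 _) |>.false

lemma exists_decides_nat (Q : ℕ → Submodule 𝔽 E → Prop)
    (hQ : ∀ j {V X : Submodule 𝔽 E} (m : ℕ), X ⊓ above b m ≤ V → Q j V → Q j X)
    {W : Submodule 𝔽 E} (hW : IsBlockSubspace b W) :
    ∃ X, IsBlockSubspace b X ∧ X ≤ W ∧
      ∀ j, Q j X ∨ ∀ V, IsBlockSubspace b V → V ≤ X → ¬ Q j V := by
  obtain ⟨U, rfl, hU, hanti, hfuse⟩ := exists_antitone_chain Q hW
  obtain ⟨X, hX, hXU, hXtail⟩ := exists_inf_above_le_of_antitone hU hanti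
  refine ⟨X, hX, hXU, fun j => ?_⟩
  by_cases hnext : Q j (U (j + 1))
  · obtain ⟨N, hN⟩ := hXtail (j + 1)
    exact Or.inl (hQ j N hN hnext)
  · refine Or.inr fun V hV hVX hQV => hnext (hfuse j ?_)
    obtain ⟨N, hN⟩ := hXtail j
    exact ⟨V ⊓ above b N, hV.inf_above N, (inf_le_inf_right _ hVX).trans hN,
      hQ j N (inf_le_left.trans inf_le_left) hQV⟩

lemma exists_decides {ι : Type*} [Countable ι] (Q : ι → Submodule 𝔽 E → Prop)
    (hQ : ∀ i {V X : Submodule 𝔽 E} (m : ℕ), X ⊓ above b m ≤ V → Q i V → Q i X)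
    {W : Submodule 𝔽 E} (hW : IsBlockSubspace b W) :
    ∃ X, IsBlockSubspace b X ∧ X ≤ W ∧
      ∀ i, Q i X ∨ ∀ V, IsBlockSubspace b V → V ≤ X → ¬ Q i V := by
  obtain ⟨e, he⟩ := Countable.exists_injective_nat ι
  obtain ⟨X, hX, hXW, hdec⟩ := exists_decides_nat (fun j V => ∀ i, e i = j → Q i V)
    (fun j _ _ m hm hV i hi => hQ i m hm (hV i hi)) hW
  refine ⟨X, hX, hXW, fun i => (hdec (e i)).imp (fun h => h i rfl) fun h V hV hVX hQV => ?_⟩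
  exact h V hV hVX fun i' hi' => he hi' ▸ hQV

lemma exists_tailIn_or_denseBelow {ι : Type*} [Countable ι] (S : ι → E → Prop)
    {W : Submodule 𝔽 E} (hW : IsBlockSubspace b W) :
    ∃ X, IsBlockSubspace b X ∧ X ≤ W ∧
      ∀ i, TailIn b X (S i) ∨ DenseBelow b X fun v => ¬ S i v := by
  obtain ⟨X, hX, hXW, hdec⟩ :=
    exists_decides (fun i V => TailIn b V (S i)) (fun _ _ _ _ hm => TailIn.of_inf_above_le hm) hW
  refine ⟨X, hX, hXW, fun i => (hdec i).imp id fun h Z hZ hZX => ?_⟩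
  by_contra hne
  push Not at hne
  exact h Z hZ hZX ⟨0, fun v hv hv0 _ => hne v hv hv0⟩

/-- Simultaneous determinacy of the one-round games `x ↦ y` with payoffs `D i x y`. -/
lemma exists_tailIn_denseBelow_or_denseBelow_tailIn {ι : Type*} [Countable ι] [Countable E]
    (D : ι → E → E → Prop) {W : Submodule 𝔽 E} (hW : IsBlockSubspace b W) :
    ∃ X, IsBlockSubspace b X ∧ X ≤ W ∧ ∀ i,
      (TailIn b X fun x => DenseBelow b X fun y => ¬ D i x y) ∨
        DenseBelow b X fun x => TailIn b X fun y => D i x y := by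
  obtain ⟨X₁, hX₁, hX₁W, hdec₁⟩ :=
    exists_tailIn_or_denseBelow (fun (ix : ι × E) y => D ix.1 ix.2 y) hW
  obtain ⟨X, hX, hXX₁, hdec⟩ :=
    exists_tailIn_or_denseBelow (fun i x => ¬ TailIn b X₁ (D i x)) hX₁
  refine ⟨X, hX, hXX₁.trans hX₁W, fun i => (hdec i).imp (fun h => h.imp fun x hx => ?_)
    fun h => h.imp fun x hx => (not_not.1 hx).mono hXX₁⟩
  exact ((hdec₁ (i, x)).resolve_left hx).mono hXX₁

end Fusion

section Sequences

variable {α : Type*}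

lemma hist_zero (p : ℕ → α) : hist p 0 = [] := rfl

lemma hist_succ (p : ℕ → α) (n : ℕ) : hist p (n + 1) = hist p n ++ [p n] := by
  simp only [hist, List.ofFn_succ', List.concat_eq_append, Fin.val_castSucc, Fin.val_last]

lemma hist_succ' (p : ℕ → α) (n : ℕ) : hist p (n + 1) = p 0 :: hist (fun j => p (j + 1)) n := by
  simp [hist, List.ofFn_succ]

lemma hist_map {β : Type*} (f : α → β) (p : ℕ → α) (n : ℕ) :
    (hist p n).map f = hist (fun j => f (p j)) n := by
  simp [hist, List.map_ofFn, Function.comp_def]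

lemma prefCat_nil (f : ℕ → α) : prefCat [] f = f := by
  funext n
  simp [prefCat]

lemma prefCat_hist_of_lt {f g : ℕ → α} {m i : ℕ} (hi : i < m) : prefCat (hist f m) g i = f i := by
  simp [prefCat, hist, hi]

lemma hist_interleave_succ (x y : ℕ → α) (k : ℕ) :
    hist (interleave x y) (2 * (k + 1)) = hist (interleave x y) (2 * k) ++ [x k, y k] := by
  rw [show 2 * (k + 1) = 2 * k + 1 + 1 by ring, hist_succ, hist_succ]
  simp [interleave, Nat.add_mod, Nat.add_div]

lemma prefCat_interleave (s : List α) (x y : ℕ → α) :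
    prefCat s (interleave x y) =
      prefCat (s ++ [x 0, y 0]) (interleave (fun i => x (i + 1)) (fun i => y (i + 1))) := by
  funext n
  simp only [prefCat, interleave, List.length_append, List.length_cons, List.length_nil]
  rcases lt_trichotomy n s.length with h | rfl | h
  · simp [h, show n < s.length + 2 by omega, List.getElem_append_left h]
  · simp
  · rcases Nat.lt_or_ge n (s.length + 2) with h' | h'
    · obtain rfl : n = s.length + 1 := by omega
      simp
    · have h2 : (n - (s.length + 2)) % 2 = (n - s.length) % 2 := by omega
      have h3 : (n - s.length) / 2 = (n - (s.length + 2)) / 2 + 1 := by omega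
      simp [show ¬ n < s.length by omega, show ¬ n < s.length + 2 by omega, h2, h3]

variable [TopologicalSpace α] [DiscreteTopology α]

lemma mem_closure_of_prefCat {A : Set (ℕ → α)} {f : ℕ → α}
    (h : ∀ n, ∃ m ≥ n, ∃ g, prefCat (hist f m) g ∈ A) : f ∈ closure A := by
  rw [(PiNat.isTopologicalBasis_cylinders fun _ : ℕ => α).mem_closure_iff]
  rintro _ ⟨x, n, rfl⟩ hf
  obtain ⟨m, hmn, g, hg⟩ := h n
  refine ⟨_, ?_, hg⟩
  rw [← PiNat.mem_cylinder_iff_eq.1 hf, PiNat.mem_cylinder_iff]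
  exact fun i hi => prefCat_hist_of_lt (hi.trans_le hmn)

end Sequences

section GameA

variable {𝔽 : Type} [Field 𝔽] {E : Type} [AddCommGroup E] [Module 𝔽 E]
  {b : Module.Basis ℕ 𝔽 E} {X V : Submodule 𝔽 E} {C : Set (ℕ → E)}

variable (b) in
def LegalA (X : Submodule 𝔽 E) (n₀ : ℕ) (σ : List (E × Submodule 𝔽 E) → E × ℕ)
    (p : ℕ → E × Submodule 𝔽 E) : Prop :=
  ∀ i, (p i).1 ∈ X ∧ (p i).1 ≠ 0 ∧ NatLt b (natsA n₀ σ p i) (p i).1 ∧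
    VecLt b (p i).1 (p (i + 1)).1 ∧ IsBlockSubspace b (p i).2 ∧ (p i).2 ≤ X

variable (b) in
def IIWinsAEvenWith (X : Submodule 𝔽 E) (pre : List E) (A : Set (ℕ → E)) (n₀ : ℕ)
    (σ : List (E × Submodule 𝔽 E) → E × ℕ) : Prop :=
  ∀ p, LegalA b X n₀ σ p →
    (∀ i, (σ (hist p (i + 1))).1 ∈ (p i).2 ∧ (σ (hist p (i + 1))).1 ≠ 0 ∧
        VecLt b (σ (hist p (i + 1))).1 (σ (hist p (i + 2))).1 ∧
        natsA n₀ σ p i < natsA n₀ σ p (i + 1)) ∧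
      prefCat pre (interleave (fun i => (p i).1) (fun i => (σ (hist p (i + 1))).1)) ∈ A

lemma natsA_succ (n₀ : ℕ) (σ : List (E × Submodule 𝔽 E) → E × ℕ) (p : ℕ → E × Submodule 𝔽 E)
    (k : ℕ) : natsA n₀ σ p (k + 1) = (σ (hist p (k + 1))).2 := rfl

variable (b) in
def restrictA (σ : List (E × Submodule 𝔽 E) → E × ℕ) (m : ℕ) :
    List (E × Submodule 𝔽 E) → E × ℕ :=
  fun h => Prod.map id (· + (m + 1)) (σ (h.map (Prod.map id (· ⊓ above b m))))

lemma restrictA_hist (σ : List (E × Submodule 𝔽 E) → E × ℕ) (m : ℕ)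
    (p : ℕ → E × Submodule 𝔽 E) (k : ℕ) :
    restrictA b σ m (hist p k) =
      Prod.map id (· + (m + 1)) (σ (hist (fun i => Prod.map id (· ⊓ above b m) (p i)) k)) := by
  rw [restrictA, hist_map]

lemma natsA_restrictA (n₀ : ℕ) (σ : List (E × Submodule 𝔽 E) → E × ℕ) (m : ℕ)
    (p : ℕ → E × Submodule 𝔽 E) (k : ℕ) :
    natsA (n₀ + (m + 1)) (restrictA b σ m) p k =
      natsA n₀ σ (fun i => Prod.map id (· ⊓ above b m) (p i)) k + (m + 1) := by
  cases k with
  | zero => rfl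
  | succ k => rw [natsA_succ, natsA_succ, restrictA_hist]; rfl

lemma LegalA.restrict {n₀ m : ℕ} {σ : List (E × Submodule 𝔽 E) → E × ℕ}
    {p : ℕ → E × Submodule 𝔽 E} (hp : LegalA b X (n₀ + (m + 1)) (restrictA b σ m) p)
    (hXV : X ⊓ above b m ≤ V) :
    LegalA b V n₀ σ fun i => Prod.map id (· ⊓ above b m) (p i) := by
  intro i
  obtain ⟨hxX, hx0, hxn, hxx, hZ, hZX⟩ := hp i
  rw [natsA_restrictA] at hxn
  exact ⟨hXV ⟨hxX, mem_above_iff.2 (hxn.mono (by omega))⟩, hx0, hxn.mono (by omega), hxx,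
    hZ.inf_above m, (inf_le_inf_right _ hZX).trans hXV⟩

lemma IIWinsAEvenWith.restrict {pre : List E} {n₀ m : ℕ} {σ : List (E × Submodule 𝔽 E) → E × ℕ}
    (hσ : IIWinsAEvenWith b V pre C n₀ σ) (hXV : X ⊓ above b m ≤ V) :
    IIWinsAEvenWith b X pre C (n₀ + (m + 1)) (restrictA b σ m) := by
  intro p hp
  obtain ⟨hmoves, hwin⟩ := hσ _ (hp.restrict hXV)
  simp only [restrictA_hist, natsA_restrictA, Prod.map_fst]
  refine ⟨fun i => ?_, hwin⟩
  obtain ⟨hy, hy0, hyy, hn⟩ := hmoves i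
  exact ⟨hy.1, hy0, hyy, by omega⟩

lemma IIWinsAEvenWith.natLt_restrictA {pre : List E} {n₀ m : ℕ}
    {σ : List (E × Submodule 𝔽 E) → E × ℕ} (hσ : IIWinsAEvenWith b V pre C n₀ σ)
    (hXV : X ⊓ above b m ≤ V) {p : ℕ → E × Submodule 𝔽 E}
    (hp : LegalA b X (n₀ + (m + 1)) (restrictA b σ m) p) (k : ℕ) :
    NatLt b m (restrictA b σ m (hist p (k + 1))).1 := by
  rw [restrictA_hist]
  exact mem_above_iff.1 ((hσ _ (hp.restrict hXV)).1 k).1.2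

lemma IIWinsAEven.of_inf_above_le {pre : List E} {m : ℕ} (h : IIWinsAEven b V pre C)
    (hXV : X ⊓ above b m ≤ V) : IIWinsAEven b X pre C :=
  let ⟨_, _, hσ⟩ := h
  ⟨_, _, IIWinsAEvenWith.restrict hσ hXV⟩

end GameA

section PositionalA

variable {𝔽 : Type} [Field 𝔽] {E : Type} [AddCommGroup E] [Module 𝔽 E]
  {b : Module.Basis ℕ 𝔽 E} {X : Submodule 𝔽 E} {C : Set (ℕ → E)}

def posA (pick : List E → E → Submodule 𝔽 E → E) (s₀ : List E)
    (h : List (E × Submodule 𝔽 E)) : List E :=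
  h.foldl (fun s q => s ++ [q.1, pick s q.1 q.2]) s₀

def positionalA (ann : List E → ℕ) (pick : List E → E → Submodule 𝔽 E → E) (s₀ : List E) :
    List (E × Submodule 𝔽 E) → E × ℕ :=
  fun h => ((posA pick s₀ h).getLastD 0, ann (posA pick s₀ h))

variable {ann : List E → ℕ} {pick : List E → E → Submodule 𝔽 E → E} {s₀ : List E}

lemma posA_hist_succ (p : ℕ → E × Submodule 𝔽 E) (k : ℕ) :
    posA pick s₀ (hist p (k + 1)) =
      posA pick s₀ (hist p k) ++ [(p k).1, pick (posA pick s₀ (hist p k)) (p k).1 (p k).2] := by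
  rw [posA, hist_succ, List.foldl_append]
  rfl

lemma positionalA_hist_succ (p : ℕ → E × Submodule 𝔽 E) (k : ℕ) :
    positionalA ann pick s₀ (hist p (k + 1)) =
      (pick (posA pick s₀ (hist p k)) (p k).1 (p k).2, ann (posA pick s₀ (hist p (k + 1)))) := by
  rw [positionalA, posA_hist_succ]
  simp

lemma natsA_positionalA (p : ℕ → E × Submodule 𝔽 E) (k : ℕ) :
    natsA (ann s₀) (positionalA ann pick s₀) p k = ann (posA pick s₀ (hist p k)) := by
  cases k <;> rfl

lemma posA_hist (p : ℕ → E × Submodule 𝔽 E) (k : ℕ) :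
    posA pick s₀ (hist p k) = s₀ ++ hist (interleave (fun i => (p i).1)
      (fun i => (positionalA ann pick s₀ (hist p (i + 1))).1)) (2 * k) := by
  induction k with
  | zero => simp [posA, hist]
  | succ k ih =>
    rw [posA_hist_succ, hist_interleave_succ, positionalA_hist_succ, ← List.append_assoc, ← ih]

lemma iIWinsAEvenWith_positionalA {P : List E → Prop} (h₀ : P s₀)
    (hann : ∀ s, suppBound b s ≤ ann s)
    (hpick : ∀ s, P s → ∀ x ∈ X, x ≠ 0 → NatLt b (ann s) x → ∀ Z, IsBlockSubspace b Z → Z ≤ X →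
      pick s x Z ∈ Z ∧ pick s x Z ≠ 0 ∧ NatLt b (suppBound b s) (pick s x Z) ∧
        P (s ++ [x, pick s x Z]))
    (hout : ∀ x y : ℕ → E, (∀ k, P (s₀ ++ hist (interleave x y) (2 * k))) →
      prefCat s₀ (interleave x y) ∈ C) :
    IIWinsAEvenWith b X s₀ C (ann s₀) (positionalA ann pick s₀) := by
  intro p hp
  set s : ℕ → List E := fun k => posA pick s₀ (hist p k)
  have hs (k : ℕ) : s (k + 1) = s k ++ [(p k).1, pick (s k) (p k).1 (p k).2] :=
    posA_hist_succ p k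
  have hy (k : ℕ) : (positionalA ann pick s₀ (hist p (k + 1))).1 = pick (s k) (p k).1 (p k).2 := by
    rw [positionalA_hist_succ]
  have hx (k : ℕ) : NatLt b (ann (s k)) (p k).1 := by
    rw [← natsA_positionalA (ann := ann) (pick := pick)]; exact (hp k).2.2.1
  have hspec (k : ℕ) (hk : P (s k)) :=
    hpick (s k) hk _ (hp k).1 (hp k).2.1 (hx k) _ (hp k).2.2.2.2.1 (hp k).2.2.2.2.2
  have hinv (k : ℕ) : P (s k) := by
    induction k with
    | zero => exact h₀
    | succ k ih => rw [hs]; exact (hspec k ih).2.2.2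
  refine ⟨fun i => ?_, hout _ _ fun k => (posA_hist p k).symm ▸ hinv k⟩
  obtain ⟨hyZ, hy0, -, -⟩ := hspec i (hinv i)
  rw [natsA_positionalA, natsA_positionalA, hy, show i + 2 = i + 1 + 1 from rfl, hy]
  refine ⟨hyZ, hy0, ?_, ?_⟩
  · exact NatLt.vecLt_of_mem (by simp [hs]) (hspec (i + 1) (hinv _)).2.2.1
  · exact ((hx i).lt_suppBound (s := s (i + 1)) (by simp [hs]) (hp i).2.1).trans_le (hann _)

lemma iIWinsAEven_of_invariant {P : List E → Prop} (h₀ : P s₀)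
    (hP : ∀ s, P s → TailIn b X fun x => DenseBelow b X fun y => P (s ++ [x, y]))
    (hout : ∀ x y : ℕ → E, (∀ k, P (s₀ ++ hist (interleave x y) (2 * k))) →
      prefCat s₀ (interleave x y) ∈ C) :
    IIWinsAEven b X s₀ C := by
  choose! N hN using hP
  have hpick : ∀ s, P s → ∀ x ∈ X, x ≠ 0 → NatLt b (max (N s) (suppBound b s)) x →
      ∀ Z, IsBlockSubspace b Z → Z ≤ X →
        ∃ y ∈ Z, y ≠ 0 ∧ NatLt b (suppBound b s) y ∧ P (s ++ [x, y]) :=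
    fun s hs x hx hx0 hxn Z hZ hZX =>
      (hN s hs x hx hx0 (hxn.mono (le_max_left _ _))).exists_natLt hZ hZX _
  choose! pick hpick using hpick
  exact ⟨_, _, iIWinsAEvenWith_positionalA h₀ (fun _ => le_max_right _ _) hpick hout⟩

end PositionalA

section OneRoundA

variable {𝔽 : Type} [Field 𝔽] {E : Type} [AddCommGroup E] [Module 𝔽 E]
  {b : Module.Basis ℕ 𝔽 E} {X : Submodule 𝔽 E} {C : Set (ℕ → E)}

def followA (first : E × Submodule 𝔽 E → E × ℕ)
    (cont : E × Submodule 𝔽 E → List (E × Submodule 𝔽 E) → E × ℕ) :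
    List (E × Submodule 𝔽 E) → E × ℕ
  | [] => (0, 0) -- never consulted: II only moves after I has
  | [q] => first q
  | q :: h => cont q h

variable {first : E × Submodule 𝔽 E → E × ℕ}
  {cont : E × Submodule 𝔽 E → List (E × Submodule 𝔽 E) → E × ℕ}

lemma followA_hist_one (p : ℕ → E × Submodule 𝔽 E) :
    followA first cont (hist p 1) = first (p 0) := by
  rw [hist_succ', hist_zero]; rfl

lemma followA_hist_add_two (p : ℕ → E × Submodule 𝔽 E) (k : ℕ) :
    followA first cont (hist p (k + 2)) = cont (p 0) (hist (fun j => p (j + 1)) (k + 1)) := by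
  rw [hist_succ', hist_succ' (fun j => p (j + 1))]; rfl

lemma natsA_followA (n₀ : ℕ) (p : ℕ → E × Submodule 𝔽 E) (k : ℕ) :
    natsA n₀ (followA first cont) p (k + 1) =
      natsA (first (p 0)).2 (cont (p 0)) (fun j => p (j + 1)) k := by
  cases k with
  | zero => exact congrArg Prod.snd (followA_hist_one p)
  | succ k => exact congrArg Prod.snd (followA_hist_add_two p k)

lemma LegalA.tail {n₀ : ℕ} {p : ℕ → E × Submodule 𝔽 E}
    (hp : LegalA b X n₀ (followA first cont) p) :
    LegalA b X (first (p 0)).2 (cont (p 0)) fun j => p (j + 1) := fun i => by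
  simpa only [natsA_followA] using hp (i + 1)

lemma iIWinsAEvenWith_followA {s : List E} {n₀ : ℕ}
    (h : ∀ q : E × Submodule 𝔽 E, q.1 ∈ X → q.1 ≠ 0 → NatLt b n₀ q.1 → IsBlockSubspace b q.2 →
      q.2 ≤ X → (first q).1 ∈ q.2 ∧ (first q).1 ≠ 0 ∧ n₀ < (first q).2 ∧
        IIWinsAEvenWith b X (s ++ [q.1, (first q).1]) C (first q).2 (cont q) ∧
        ∀ p, LegalA b X (first q).2 (cont q) p → VecLt b (first q).1 (cont q (hist p 1)).1) :
    IIWinsAEvenWith b X s C n₀ (followA first cont) := by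
  intro p hp
  obtain ⟨hx₀, hx₀0, hx₀n, -, hZ₀, hZ₀X⟩ := hp 0
  obtain ⟨hy₀, hy₀0, hn₀, hcont, hblock⟩ := h (p 0) hx₀ hx₀0 hx₀n hZ₀ hZ₀X
  obtain ⟨hmoves, hwin⟩ := hcont _ hp.tail
  refine ⟨fun i => ?_, ?_⟩
  · cases i with
    | zero =>
      rw [followA_hist_one, followA_hist_add_two]
      exact ⟨hy₀, hy₀0, hblock _ hp.tail, hn₀⟩
    | succ k =>
      rw [show k + 1 + 2 = k + 1 + 1 + 1 from rfl, followA_hist_add_two, followA_hist_add_two,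
        natsA_followA, natsA_followA]
      exact hmoves k
  · rw [prefCat_interleave, followA_hist_one]
    convert hwin using 4 with i
    exact congrArg Prod.fst (followA_hist_add_two p i)

lemma iIWinsAEven_of_tailIn {s : List E}
    (h : TailIn b X fun x => DenseBelow b X fun y => IIWinsAEven b X (s ++ [x, y]) C) :
    IIWinsAEven b X s C := by
  obtain ⟨N, hN⟩ := h
  have hy (x : E) (hx : x ∈ X) (hx0 : x ≠ 0) (hxN : NatLt b N x) (Z : Submodule 𝔽 E)
      (hZ : IsBlockSubspace b Z) (hZX : Z ≤ X) :
      ∃ y ∈ Z, y ≠ 0 ∧ IIWinsAEven b X (s ++ [x, y]) C :=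
    hN x hx hx0 hxN Z hZ hZX
  choose! y hy using hy
  have hσ (x y : E) (h : IIWinsAEven b X (s ++ [x, y]) C) :
      ∃ n σ, IIWinsAEvenWith b X (s ++ [x, y]) C n σ := h
  choose! n σ hσ using hσ
  -- Continuing above `y₀` keeps II's vectors a block sequence, above `N` its integers increasing.
  let m (q : E × Submodule 𝔽 E) : ℕ := max N (suppBound b [y q.1 q.2])
  refine ⟨N, followA (fun q => (y q.1 q.2, n q.1 (y q.1 q.2) + (m q + 1)))
    (fun q => restrictA b (σ q.1 (y q.1 q.2)) (m q)),
    iIWinsAEvenWith_followA fun q hx hx0 hxN hZ hZX => ?_⟩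
  obtain ⟨hyZ, hy0, hwin⟩ := hy q.1 hx hx0 hxN q.2 hZ hZX
  have hcont := hσ _ _ hwin
  refine ⟨hyZ, hy0, ?_, hcont.restrict inf_le_left, fun p hp => ?_⟩
  · exact (le_max_left N _).trans_lt (Nat.lt_add_left _ (Nat.lt_succ_self _))
  · exact NatLt.vecLt_of_mem (List.mem_singleton_self _)
      ((hcont.natLt_restrictA inf_le_left hp 0).mono (le_max_right _ _))

end OneRoundA

section GameB

variable {𝔽 : Type} [Field 𝔽] {E : Type} [AddCommGroup E] [Module 𝔽 E]
  {b : Module.Basis ℕ 𝔽 E} {X V : Submodule 𝔽 E} {C : Set (ℕ → E)}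

variable (b) in
def LegalB (X : Submodule 𝔽 E) (τ : List (Submodule 𝔽 E × E) → Submodule 𝔽 E → E × ℕ)
    (Z : ℕ → Submodule 𝔽 E) (y : ℕ → E) : Prop :=
  ∀ i, IsBlockSubspace b (Z i) ∧ Z i ≤ X ∧ y i ∈ X ∧ y i ≠ 0 ∧
    NatLt b (τ (hist (fun j => (Z j, y j)) i) (Z i)).2 (y i) ∧ VecLt b (y i) (y (i + 1))

variable (b) in
def IWinsBEvenWith (X : Submodule 𝔽 E) (pre : List E) (A : Set (ℕ → E))
    (τ : List (Submodule 𝔽 E × E) → Submodule 𝔽 E → E × ℕ) : Prop :=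
  ∀ Z y, LegalB b X τ Z y →
    (∀ i, (τ (hist (fun j => (Z j, y j)) i) (Z i)).1 ∈ Z i ∧
        (τ (hist (fun j => (Z j, y j)) i) (Z i)).1 ≠ 0 ∧
        VecLt b (τ (hist (fun j => (Z j, y j)) i) (Z i)).1
          (τ (hist (fun j => (Z j, y j)) (i + 1)) (Z (i + 1))).1 ∧
        (τ (hist (fun j => (Z j, y j)) i) (Z i)).2 <
          (τ (hist (fun j => (Z j, y j)) (i + 1)) (Z (i + 1))).2) ∧
      prefCat pre (interleave (fun i => (τ (hist (fun j => (Z j, y j)) i) (Z i)).1) y) ∈ A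

variable (b) in
def restrictB (τ : List (Submodule 𝔽 E × E) → Submodule 𝔽 E → E × ℕ) (m : ℕ) :
    List (Submodule 𝔽 E × E) → Submodule 𝔽 E → E × ℕ :=
  fun h Z => Prod.map id (· + (m + 1)) (τ (h.map (Prod.map (· ⊓ above b m) id)) (Z ⊓ above b m))

lemma restrictB_hist (τ : List (Submodule 𝔽 E × E) → Submodule 𝔽 E → E × ℕ) (m : ℕ)
    (Z : ℕ → Submodule 𝔽 E) (y : ℕ → E) (k : ℕ) :
    restrictB b τ m (hist (fun j => (Z j, y j)) k) (Z k) = Prod.map id (· + (m + 1))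
      (τ (hist (fun j => (Z j ⊓ above b m, y j)) k) (Z k ⊓ above b m)) := by
  rw [restrictB, hist_map]
  rfl

lemma LegalB.restrict {m : ℕ} {τ : List (Submodule 𝔽 E × E) → Submodule 𝔽 E → E × ℕ}
    {Z : ℕ → Submodule 𝔽 E} {y : ℕ → E} (hZy : LegalB b X (restrictB b τ m) Z y)
    (hXV : X ⊓ above b m ≤ V) : LegalB b V τ (fun i => Z i ⊓ above b m) y := by
  intro i
  obtain ⟨hZ, hZX, hyX, hy0, hyn, hyy⟩ := hZy i
  rw [restrictB_hist] at hyn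
  exact ⟨hZ.inf_above m, (inf_le_inf_right _ hZX).trans hXV,
    hXV ⟨hyX, mem_above_iff.2 (hyn.mono (by simp only [Prod.map_snd]; omega))⟩, hy0,
    hyn.mono (by simp only [Prod.map_snd]; omega), hyy⟩

lemma IWinsBEvenWith.restrict {pre : List E} {m : ℕ}
    {τ : List (Submodule 𝔽 E × E) → Submodule 𝔽 E → E × ℕ}
    (hτ : IWinsBEvenWith b V pre C τ) (hXV : X ⊓ above b m ≤ V) :
    IWinsBEvenWith b X pre C (restrictB b τ m) := by
  intro Z y hZy
  obtain ⟨hmoves, hwin⟩ := hτ _ _ (hZy.restrict hXV)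
  simp only [restrictB_hist, Prod.map_fst, Prod.map_snd]
  refine ⟨fun i => ?_, hwin⟩
  obtain ⟨hx, hx0, hxx, hn⟩ := hmoves i
  exact ⟨hx.1, hx0, hxx, Nat.add_lt_add_right hn _⟩

lemma lt_restrictB_snd (τ : List (Submodule 𝔽 E × E) → Submodule 𝔽 E → E × ℕ) (m : ℕ)
    (h : List (Submodule 𝔽 E × E)) (Z : Submodule 𝔽 E) : m < (restrictB b τ m h Z).2 := by
  simp only [restrictB, Prod.map_snd]
  omega

lemma IWinsBEvenWith.natLt_restrictB {pre : List E} {m : ℕ}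
    {τ : List (Submodule 𝔽 E × E) → Submodule 𝔽 E → E × ℕ} (hτ : IWinsBEvenWith b V pre C τ)
    (hXV : X ⊓ above b m ≤ V) {Z : ℕ → Submodule 𝔽 E} {y : ℕ → E}
    (hZy : LegalB b X (restrictB b τ m) Z y) (k : ℕ) :
    NatLt b m (restrictB b τ m (hist (fun j => (Z j, y j)) k) (Z k)).1 := by
  rw [restrictB_hist]
  exact mem_above_iff.1 ((hτ _ _ (hZy.restrict hXV)).1 k).1.2

lemma IWinsBEven.of_inf_above_le {pre : List E} {m : ℕ} (h : IWinsBEven b V pre C)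
    (hXV : X ⊓ above b m ≤ V) : IWinsBEven b X pre C :=
  let ⟨_, hτ⟩ := h
  ⟨_, IWinsBEvenWith.restrict hτ hXV⟩

end GameB

section PositionalB

variable {𝔽 : Type} [Field 𝔽] {E : Type} [AddCommGroup E] [Module 𝔽 E]
  {b : Module.Basis ℕ 𝔽 E} {X : Submodule 𝔽 E} {C : Set (ℕ → E)}

def posB (pick : List E → Submodule 𝔽 E → E) (s₀ : List E) (h : List (Submodule 𝔽 E × E)) :
    List E :=
  h.foldl (fun s q => s ++ [pick s q.1, q.2]) s₀

def positionalB (ann : List E → E → ℕ) (pick : List E → Submodule 𝔽 E → E) (s₀ : List E) :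
    List (Submodule 𝔽 E × E) → Submodule 𝔽 E → E × ℕ :=
  fun h Z => (pick (posB pick s₀ h) Z, ann (posB pick s₀ h) (pick (posB pick s₀ h) Z))

variable {ann : List E → E → ℕ} {pick : List E → Submodule 𝔽 E → E} {s₀ : List E}

lemma posB_hist_succ (Z : ℕ → Submodule 𝔽 E) (y : ℕ → E) (k : ℕ) :
    posB pick s₀ (hist (fun j => (Z j, y j)) (k + 1)) =
      posB pick s₀ (hist (fun j => (Z j, y j)) k) ++
        [pick (posB pick s₀ (hist (fun j => (Z j, y j)) k)) (Z k), y k] := by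
  rw [posB, hist_succ, List.foldl_append]
  rfl

lemma posB_hist (Z : ℕ → Submodule 𝔽 E) (y : ℕ → E) (k : ℕ) :
    posB pick s₀ (hist (fun j => (Z j, y j)) k) = s₀ ++ hist (interleave
      (fun i => (positionalB ann pick s₀ (hist (fun j => (Z j, y j)) i) (Z i)).1) y) (2 * k) := by
  induction k with
  | zero => simp [posB, hist]
  | succ k ih =>
    rw [posB_hist_succ, hist_interleave_succ, ← List.append_assoc, ← ih]
    rfl

lemma iWinsBEvenWith_positionalB {P : List E → Prop} (h₀ : P s₀)
    (hann : ∀ s x, suppBound b (s ++ [x]) ≤ ann s x)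
    (hpick : ∀ s, P s → ∀ Z, IsBlockSubspace b Z → Z ≤ X →
      pick s Z ∈ Z ∧ pick s Z ≠ 0 ∧ NatLt b (suppBound b s) (pick s Z) ∧
        ∀ y ∈ X, y ≠ 0 → NatLt b (ann s (pick s Z)) y → P (s ++ [pick s Z, y]))
    (hout : ∀ x y : ℕ → E, (∀ k, P (s₀ ++ hist (interleave x y) (2 * k))) →
      prefCat s₀ (interleave x y) ∈ C) :
    IWinsBEvenWith b X s₀ C (positionalB ann pick s₀) := by
  intro Z y hZy
  set s : ℕ → List E := fun k => posB pick s₀ (hist (fun j => (Z j, y j)) k)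
  have hs (k : ℕ) : s (k + 1) = s k ++ [pick (s k) (Z k), y k] := posB_hist_succ Z y k
  have hx (k : ℕ) : positionalB ann pick s₀ (hist (fun j => (Z j, y j)) k) (Z k) =
      (pick (s k) (Z k), ann (s k) (pick (s k) (Z k))) := rfl
  have hy (k : ℕ) : NatLt b (ann (s k) (pick (s k) (Z k))) (y k) := by
    have h := (hZy k).2.2.2.2.1
    rwa [hx] at h
  have hspec (k : ℕ) (hk : P (s k)) := hpick (s k) hk (Z k) (hZy k).1 (hZy k).2.1
  have hinv (k : ℕ) : P (s k) := by
    induction k with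
    | zero => exact h₀
    | succ k ih => rw [hs]; exact (hspec k ih).2.2.2 _ (hZy k).2.2.1 (hZy k).2.2.2.1 (hy k)
  refine ⟨fun i => ?_, hout _ _ fun k => (posB_hist Z y k).symm ▸ hinv k⟩
  obtain ⟨hxZ, hx0, -, -⟩ := hspec i (hinv i)
  rw [hx, hx]
  refine ⟨hxZ, hx0, ?_, ?_⟩
  · exact NatLt.vecLt_of_mem (by simp [hs]) (hspec (i + 1) (hinv _)).2.2.1
  · exact ((hy i).lt_suppBound (s := s (i + 1) ++ [pick (s (i + 1)) (Z (i + 1))])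
      (by simp [hs]) (hZy i).2.2.2.1).trans_le (hann _ _)

lemma iWinsBEven_of_invariant {P : List E → Prop} (h₀ : P s₀)
    (hP : ∀ s, P s → DenseBelow b X fun x => TailIn b X fun y => P (s ++ [x, y]))
    (hout : ∀ x y : ℕ → E, (∀ k, P (s₀ ++ hist (interleave x y) (2 * k))) →
      prefCat s₀ (interleave x y) ∈ C) :
    IWinsBEven b X s₀ C := by
  have hpick (s : List E) (hs : P s) (Z : Submodule 𝔽 E) (hZ : IsBlockSubspace b Z)
      (hZX : Z ≤ X) : ∃ x ∈ Z, x ≠ 0 ∧ NatLt b (suppBound b s) x ∧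
        TailIn b X fun y => P (s ++ [x, y]) :=
    (hP s hs).exists_natLt hZ hZX _
  choose! pick hpick using hpick
  have hN (s : List E) (x : E) (h : TailIn b X fun y => P (s ++ [x, y])) :
      ∃ N, ∀ y ∈ X, y ≠ 0 → NatLt b N y → P (s ++ [x, y]) := h
  choose! N hN using hN
  refine ⟨_, iWinsBEvenWith_positionalB (ann := fun s x => max (N s x) (suppBound b (s ++ [x])))
    (pick := pick) h₀ (fun _ _ => le_max_right _ _) (fun s hs Z hZ hZX => ?_) hout⟩
  obtain ⟨hxZ, hx0, hxs, hxN⟩ := hpick s hs Z hZ hZX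
  exact ⟨hxZ, hx0, hxs, fun y hy hy0 hyN => hN _ _ hxN y hy hy0 (hyN.mono (le_max_left _ _))⟩

end PositionalB

section OneRoundB

variable {𝔽 : Type} [Field 𝔽] {E : Type} [AddCommGroup E] [Module 𝔽 E]
  {b : Module.Basis ℕ 𝔽 E} {X : Submodule 𝔽 E} {C : Set (ℕ → E)}

def followB (first : Submodule 𝔽 E → E × ℕ)
    (cont : Submodule 𝔽 E × E → List (Submodule 𝔽 E × E) → Submodule 𝔽 E → E × ℕ) :
    List (Submodule 𝔽 E × E) → Submodule 𝔽 E → E × ℕ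
  | [], Z => first Z
  | q :: h, Z => cont q h Z

variable {first : Submodule 𝔽 E → E × ℕ}
  {cont : Submodule 𝔽 E × E → List (Submodule 𝔽 E × E) → Submodule 𝔽 E → E × ℕ}

lemma followB_hist_succ (Z : ℕ → Submodule 𝔽 E) (y : ℕ → E) (k : ℕ) :
    followB first cont (hist (fun j => (Z j, y j)) (k + 1)) (Z (k + 1)) =
      cont (Z 0, y 0) (hist (fun j => (Z (j + 1), y (j + 1))) k) (Z (k + 1)) := by
  rw [hist_succ']; rfl

lemma LegalB.tail {Z : ℕ → Submodule 𝔽 E} {y : ℕ → E}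
    (hZy : LegalB b X (followB first cont) Z y) :
    LegalB b X (cont (Z 0, y 0)) (fun j => Z (j + 1)) fun j => y (j + 1) := fun i => by
  simpa only [followB_hist_succ] using hZy (i + 1)

lemma iWinsBEvenWith_followB {s : List E}
    (h : ∀ Z₀, IsBlockSubspace b Z₀ → Z₀ ≤ X → (first Z₀).1 ∈ Z₀ ∧ (first Z₀).1 ≠ 0 ∧
      ∀ y₀ ∈ X, y₀ ≠ 0 → NatLt b (first Z₀).2 y₀ →
        IWinsBEvenWith b X (s ++ [(first Z₀).1, y₀]) C (cont (Z₀, y₀)) ∧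
        ∀ Z y, LegalB b X (cont (Z₀, y₀)) Z y →
          VecLt b (first Z₀).1 (cont (Z₀, y₀) [] (Z 0)).1 ∧
            (first Z₀).2 < (cont (Z₀, y₀) [] (Z 0)).2) :
    IWinsBEvenWith b X s C (followB first cont) := by
  intro Z y hZy
  obtain ⟨hZ₀, hZ₀X, hy₀X, hy₀0, hy₀n, -⟩ := hZy 0
  obtain ⟨hx₀, hx₀0, hcont⟩ := h (Z 0) hZ₀ hZ₀X
  obtain ⟨hwins, hfirst⟩ := hcont (y 0) hy₀X hy₀0 hy₀n
  obtain ⟨hmoves, hwin⟩ := hwins _ _ hZy.tail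
  refine ⟨fun i => ?_, ?_⟩
  · cases i with
    | zero =>
      rw [followB_hist_succ]
      exact ⟨hx₀, hx₀0, hfirst _ _ hZy.tail⟩
    | succ k =>
      rw [followB_hist_succ, followB_hist_succ]
      exact hmoves k
  · rw [prefCat_interleave]
    convert hwin using 4 with i
    · rfl
    · exact congrArg Prod.fst (followB_hist_succ Z y i)

lemma iWinsBEven_of_denseBelow {s : List E}
    (h : DenseBelow b X fun x => TailIn b X fun y => IWinsBEven b X (s ++ [x, y]) C) :
    IWinsBEven b X s C := by
  choose! first hfirst using h
  have hN (x : E) (h : TailIn b X fun y => IWinsBEven b X (s ++ [x, y]) C) :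
      ∃ N, ∀ y ∈ X, y ≠ 0 → NatLt b N y → IWinsBEven b X (s ++ [x, y]) C := h
  choose! N hN using hN
  have hτ (x y : E) (h : IWinsBEven b X (s ++ [x, y]) C) :
      ∃ τ, IWinsBEvenWith b X (s ++ [x, y]) C τ := h
  choose! τ hτ using hτ
  -- Continuing above `x₀` keeps I's vectors a block sequence and its integers increasing.
  let m (Z : Submodule 𝔽 E) : ℕ := max (N (first Z)) (suppBound b [first Z])
  refine ⟨followB (fun Z => (first Z, m Z)) (fun q => restrictB b (τ (first q.1) q.2) (m q.1)),
    iWinsBEvenWith_followB fun Z₀ hZ₀ hZ₀X => ?_⟩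
  obtain ⟨hx, hx0, hxN⟩ := hfirst Z₀ hZ₀ hZ₀X
  refine ⟨hx, hx0, fun y₀ hy₀ hy₀0 hy₀m => ?_⟩
  have hcont := hτ _ _ (hN _ hxN _ hy₀ hy₀0 (hy₀m.mono (le_max_left _ _)))
  refine ⟨hcont.restrict inf_le_left, fun Z y hZy => ⟨?_, lt_restrictB_snd _ _ _ _⟩⟩
  exact NatLt.vecLt_of_mem (List.mem_singleton_self _)
    ((hcont.natLt_restrictB inf_le_left hZy 0).mono (le_max_right _ _))

end OneRoundB

section Dichotomy

variable {𝔽 : Type} [Field 𝔽] {E : Type} [AddCommGroup E] [Module 𝔽 E]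
  {b : Module.Basis ℕ 𝔽 E} {X : Submodule 𝔽 E} {C : Set (ℕ → E)}

lemma iWinsBEven_of_forall_prefCat_mem {u : List E} (h : ∀ g, prefCat u g ∈ C) :
    IWinsBEven b X u C :=
  iWinsBEven_of_invariant (P := fun _ => True) trivial
    (fun _ _ _ hZ _ =>
      (hZ.exists_ne_zero).imp fun _ ⟨hv, hv0⟩ => ⟨hv, hv0, 0, fun _ _ _ _ => trivial⟩)
    fun _ _ _ => h _

lemma iIWinsAEven_of_forall_prefCat_mem {u : List E} (h : ∀ g, prefCat u g ∈ C) :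
    IIWinsAEven b X u C :=
  iIWinsAEven_of_invariant (P := fun _ => True) trivial
    (fun _ _ => ⟨0, fun _ _ _ _ _ hZ _ =>
      (hZ.exists_ne_zero).imp fun _ ⟨hv, hv0⟩ => ⟨hv, hv0, trivial⟩⟩)
    fun _ _ _ => h _

lemma iIWinsA_nil_iff {A : Set (ℕ → E)} : IIWinsA b X [] A ↔ IIWinsAEven b X [] A := Iff.rfl

lemma iWinsB_nil_iff {A : Set (ℕ → E)} : IWinsB b X [] A ↔ IWinsBEven b X [] A := Iff.rfl

variable [Countable 𝔽] [TopologicalSpace E] [DiscreteTopology E] {A : Set (ℕ → E)}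

lemma exists_dichotomy_of_isClosed (hA : IsClosed A) :
    ∃ X, IsBlockSubspace b X ∧ (IIWinsA b X [] A ∨ IWinsB b X [] Aᶜ) := by
  have : Countable E := b.repr.toEquiv.countable_iff.2 inferInstance
  obtain ⟨X₁, hX₁, -, hdec⟩ := exists_decides (fun u V => IWinsBEven b V u Aᶜ)
    (fun _ _ _ _ hm h => h.of_inf_above_le hm) (isBlockSubspace_top b)
  by_cases hroot : IWinsBEven b X₁ [] Aᶜ
  · exact ⟨X₁, hX₁, Or.inr (iWinsB_nil_iff.2 hroot)⟩
  obtain ⟨X, hX, hXX₁, hround⟩ := exists_tailIn_denseBelow_or_denseBelow_tailIn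
    (fun s x y => IWinsBEven b X₁ (s ++ [x, y]) Aᶜ) hX₁
  have hkeep (s : List E) (hs : ¬ IWinsBEven b X₁ s Aᶜ) :
      TailIn b X fun x => DenseBelow b X fun y => ¬ IWinsBEven b X₁ (s ++ [x, y]) Aᶜ := by
    refine (hround s).resolve_right fun h => ?_
    have hwin : IWinsBEven b X s Aᶜ := iWinsBEven_of_denseBelow (h.imp fun _ hx =>
      hx.imp fun _ hy => hy.of_inf_above_le (m := 0) (inf_le_left.trans hXX₁))
    exact (hdec s).elim hs fun hno => hno X hX hXX₁ hwin
  have hext (u : List E) (hu : ¬ IWinsBEven b X₁ u Aᶜ) : ∃ g, prefCat u g ∈ A := by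
    by_contra! hno
    exact hu (iWinsBEven_of_forall_prefCat_mem hno)
  refine ⟨X, hX, Or.inl ?_⟩
  rw [iIWinsA_nil_iff]
  refine iIWinsAEven_of_invariant (P := fun s => ¬ IWinsBEven b X₁ s Aᶜ) hroot hkeep
    fun x y hxy => ?_
  rw [prefCat_nil, ← hA.closure_eq]
  exact mem_closure_of_prefCat fun n =>
    ⟨2 * n, by omega, hext _ (by simpa only [List.nil_append] using hxy n)⟩

lemma exists_dichotomy_of_isOpen (hA : IsOpen A) :
    ∃ X, IsBlockSubspace b X ∧ (IIWinsA b X [] A ∨ IWinsB b X [] Aᶜ) := by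
  have : Countable E := b.repr.toEquiv.countable_iff.2 inferInstance
  obtain ⟨X₁, hX₁, -, hdec⟩ := exists_decides (fun u V => IIWinsAEven b V u A)
    (fun _ _ _ _ hm h => h.of_inf_above_le hm) (isBlockSubspace_top b)
  by_cases hroot : IIWinsAEven b X₁ [] A
  · exact ⟨X₁, hX₁, Or.inl (iIWinsA_nil_iff.2 hroot)⟩
  obtain ⟨X, hX, hXX₁, hround⟩ := exists_tailIn_denseBelow_or_denseBelow_tailIn
    (fun s x y => ¬ IIWinsAEven b X₁ (s ++ [x, y]) A) hX₁
  have hkeep (s : List E) (hs : ¬ IIWinsAEven b X₁ s A) :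
      DenseBelow b X fun x => TailIn b X fun y => ¬ IIWinsAEven b X₁ (s ++ [x, y]) A := by
    refine (hround s).resolve_left fun h => ?_
    have hwin : IIWinsAEven b X s A := iIWinsAEven_of_tailIn (h.imp fun _ hx =>
      hx.imp fun _ hy => (not_not.1 hy).of_inf_above_le (m := 0) (inf_le_left.trans hXX₁))
    exact (hdec s).elim hs fun hno => hno X hX hXX₁ hwin
  have hext (u : List E) (hu : ¬ IIWinsAEven b X₁ u A) : ∃ g, prefCat u g ∈ Aᶜ := by
    by_contra! hno
    exact hu (iIWinsAEven_of_forall_prefCat_mem fun g => not_not.1 (hno g))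
  refine ⟨X, hX, Or.inr ?_⟩
  rw [iWinsB_nil_iff]
  refine iWinsBEven_of_invariant (P := fun s => ¬ IIWinsAEven b X₁ s A) hroot hkeep
    fun x y hxy => ?_
  rw [prefCat_nil, ← hA.isClosed_compl.closure_eq]
  exact mem_closure_of_prefCat fun n =>
    ⟨2 * n, by omega, hext _ (by simpa only [List.nil_append] using hxy n)⟩

end Dichotomy

theorem relational_dichotomy
    {𝔽 : Type} [Field 𝔽] [Countable 𝔽]
    {E : Type} [AddCommGroup E] [Module 𝔽 E]
    [TopologicalSpace E] [DiscreteTopology E]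
    (b : Module.Basis ℕ 𝔽 E) (A : Set (ℕ → E)) (hA : IsOpen A ∨ IsClosed A) :
    ∃ X : Submodule 𝔽 E, IsBlockSubspace b X ∧
      (IIWinsA b X [] A ∨ IWinsB b X [] Aᶜ) :=
  hA.elim exists_dichotomy_of_isOpen exists_dichotomy_of_isClosed
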